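/- Let q be a prime power, r ≥ 2 a divisor of q-1, m ≥ 1, and 0 ≤ t ≤ m-1. Let θ generate F_{q^m}^*, let G ≤ F_q^* have order r, V an F_q-subspace of dimension t, and α_2,...,α_ℓ as in the coset partition lemma with ℓ = 1 + (q^{m-t}-1)/r. Define sequences s_i = (φ(1+α_i), φ(θ+α_i), ..., φ(θ^{q^m-2}+α_i)) for 2 ≤ i ≤ ℓ, where φ(x) = ∏_{g∈G}∏_{β∈V}(x+g+β). Then the set S = {s_2,...,s_ℓ} is a frequency hopping sequence set of (ℓ-1) = (q^{m-t}-1)/r sequences of length q^m - 1 over an alphabet of size ℓ = (q^{m-t}-1)/r + 1, whose maximum Hamming correlation H_m(S) is at most r·q^t. -/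

import Mathlib

open Polynomial Finset
open scoped Classical

/-- The (additive) coset `a + V` of a set `V`. -/
def coset {K : Type*} [Add K] (V : Set K) (a : K) : Set K := {x | ∃ v ∈ V, x = a + v}

/-- The polynomial `φ(x) = ∏_{g ∈ G} ∏_{β ∈ V} (x + g + β)`. -/
noncomputable def phiPoly {Fq K : Type*} [Field Fq] [Field K] [Fintype K] [Algebra Fq K]
    (G : Subgroup Kˣ) (V : Submodule Fq K) : Polynomial K :=
  ∏ g : G, ∏ β : V, (X + C ((g : Kˣ) : K) + C (β : K))

/-!
`φ` is invariant under `x ↦ x + v` (`v ∈ V`) and under `x ↦ g x` (`g ∈ G ⊆ F_q^*`, since `g V = V`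
and `g ^ deg φ = 1`), hence constant on each class `α_i G + V`. These classes have `deg φ = r q^t`
elements, so `φ` separates the classes and its fibres are exactly the classes. Consequently the
alphabet is `{φ(α_i)}`, two sequences differ where `θ^k = -α_i`, and a coincidence
`s_i(k) = s_j(k + τ)` makes `θ^k` a root of `φ(X + α_i) - φ(θ^τ X + α_j)`, a polynomial of degree
at most `r q^t`. It is nonzero: otherwise `i = j`, and the homothety `x ↦ θ^τ (x - α_i) + α_i`
would preserve the fibre `V` of `φ(0)`, which forces `α_i ∈ V`.
-/

section Coset

variable {A S : Type*} [AddCommGroup A] [SetLike S A]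

lemma mem_coset_iff (H : S) (a x : A) : x ∈ coset (H : Set A) a ↔ x - a ∈ H := by
  refine ⟨fun ⟨v, hv, hx⟩ => by rwa [hx, add_sub_cancel_left], fun hx => ⟨x - a, hx, ?_⟩⟩
  rw [add_sub_cancel]

lemma coset_eq_coset_iff [AddSubgroupClass S A] (H : S) (a b : A) :
    coset (H : Set A) a = coset (H : Set A) b ↔ a - b ∈ H := by
  refine ⟨fun h => ?_, fun h => Set.ext fun x => ?_⟩
  · have ha : a ∈ coset (H : Set A) b := h ▸ (mem_coset_iff H a a).2 (by simp)
    exact (mem_coset_iff H b a).1 ha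
  · rw [mem_coset_iff, mem_coset_iff]
    constructor
    · intro hx
      simpa using add_mem hx h
    · intro hx
      simpa using sub_mem hx h

end Coset

section CosetClass

variable {K : Type*} [Ring K]

def cosetClass (V : Set K) (G : Subgroup Kˣ) (a : K) : Set K :=
  ⋃ g : G, coset V (a * ((g : Kˣ) : K))

variable {S : Type*} [SetLike S K]

lemma mem_cosetClass_iff (V : S) (G : Subgroup Kˣ) (a x : K) :
    x ∈ cosetClass (V : Set K) G a ↔ ∃ g : G, x - a * ((g : Kˣ) : K) ∈ V := by
  simp only [cosetClass, Set.mem_iUnion, mem_coset_iff]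

lemma self_mem_cosetClass [AddSubgroupClass S K] (V : S) (G : Subgroup Kˣ) (a : K) :
    a ∈ cosetClass (V : Set K) G a :=
  (mem_cosetClass_iff V G a a).2 ⟨1, by simp⟩

lemma mem_cosetClass_zero_iff (V : S) (G : Subgroup Kˣ) (x : K) :
    x ∈ cosetClass (V : Set K) G 0 ↔ x ∈ V := by
  simp [mem_cosetClass_iff]

end CosetClass

namespace Polynomial

variable {R : Type*} [CommRing R] [IsDomain R]

lemma mem_of_eval_eq_of_ncard_eq_natDegree {f : R[X]} (hf : 0 < f.natDegree) {s : Set R}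
    (hs : s.ncard = f.natDegree) {c : R} (hsc : ∀ y ∈ s, f.eval y = c) {x : R}
    (hx : f.eval x = c) : x ∈ s := by
  by_contra hxs
  have hsfin : s.Finite := Set.finite_of_ncard_pos (hs ▸ hf)
  have hfin : (insert x s).Finite := hsfin.insert x
  have hf' : f - C c ≠ 0 := fun h => by
    simp [sub_eq_zero.1 h] at hf
  have hroots : hfin.toFinset.val ⊆ (f - C c).roots := fun y hy => by
    rw [Finset.mem_val, Set.Finite.mem_toFinset] at hy
    rw [mem_roots hf', IsRoot, eval_sub, eval_C, sub_eq_zero]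
    rcases hy with rfl | hy
    exacts [hx, hsc y hy]
  have := card_le_degree_of_subset_roots hroots
  rw [← Set.ncard_eq_toFinset_card _ hfin, Set.ncard_insert_of_notMem hxs hsfin, hs,
    natDegree_sub_C] at this
  omega

lemma card_le_natDegree_of_injOn {ι : Type*} {f : R[X]} (hf : f ≠ 0) {s : Finset ι}
    {e : ι → R} (he : Set.InjOn e s) (hs : ∀ k ∈ s, f.eval (e k) = 0) : s.card ≤ f.natDegree := by
  rw [← Finset.card_image_of_injOn he]
  refine card_le_degree_of_subset_roots fun y hy => ?_
  obtain ⟨k, hk, rfl⟩ := Finset.mem_image.1 hy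
  exact (mem_roots hf).2 (hs k hk)

lemma natDegree_comp_sub_comp_le (f : R[X]) (a b c : R) :
    (f.comp (X + C a) - f.comp (C c * X + C b)).natDegree ≤ f.natDegree := by
  refine (natDegree_sub_le _ _).trans (max_le ?_ ?_) <;> refine natDegree_comp_le.trans ?_
  · simp
  · simpa using Nat.mul_le_mul_left f.natDegree (natDegree_linear_le (b := b))

end Polynomial

section Homothety

variable {K S : Type*} [Field K] [SetLike S K]

lemma mem_of_mul_mem_of_forall_mul_mem (V : S) [Finite V] {d a : K} (hd : d ≠ 0)
    (hdV : ∀ v ∈ V, d * v ∈ V) (ha : d * a ∈ V) : a ∈ V := by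
  let μ : V → V := fun v => ⟨d * v, hdV v v.2⟩
  have hμ : Function.Injective μ := fun v w h =>
    Subtype.ext (mul_left_cancel₀ hd (congrArg Subtype.val h))
  obtain ⟨w, hw⟩ := (Finite.injective_iff_surjective.1 hμ) ⟨d * a, ha⟩
  have : (w : K) = a := mul_left_cancel₀ hd (congrArg Subtype.val hw)
  exact this ▸ w.2

lemma mem_of_forall_homothety_mem [AddSubgroupClass S K] (V : S) [Finite V] {a c : K}
    (hc : c ≠ 1) (hV : ∀ v ∈ V, c * (v - a) + a ∈ V) : a ∈ V := by
  have h0 : a - c * a ∈ V := by simpa [sub_eq_neg_add] using hV 0 (zero_mem V)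
  have hcV : ∀ v ∈ V, (c - 1) * v ∈ V := fun v hv => by
    convert sub_mem (sub_mem (hV v hv) h0) hv using 1
    ring
  refine mem_of_mul_mem_of_forall_mul_mem V (sub_ne_zero.2 hc) hcV ?_
  convert neg_mem h0 using 1
  ring

end Homothety

lemma exists_pow_eq_of_forall_mem_zpowers {M : Type*} [Group M] [Finite M] {θ : M}
    (hθ : ∀ x : M, x ∈ Subgroup.zpowers θ) (x : M) : ∃ k < orderOf θ, θ ^ k = x := by
  obtain ⟨n, rfl⟩ := mem_powers_iff_mem_zpowers.2 (hθ x)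
  exact ⟨n % orderOf θ, Nat.mod_lt _ (orderOf_pos θ), pow_mod_orderOf θ n⟩

lemma exists_val_pow_eq_of_ne_zero {K : Type*} [Field K] [Finite K] {θ : Kˣ}
    (hθ : ∀ x : Kˣ, x ∈ Subgroup.zpowers θ) {x : K} (hx : x ≠ 0) :
    ∃ k < orderOf θ, (θ : K) ^ k = x := by
  obtain ⟨k, hk, h⟩ := exists_pow_eq_of_forall_mem_zpowers hθ (Units.mk0 x hx)
  exact ⟨k, hk, by rw [← Units.val_pow_eq_pow_val, h, Units.val_mk0]⟩

section PhiPoly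

variable {Fq K : Type*} [Field Fq] [Field K] [Fintype K] [Algebra Fq K]
  (G : Subgroup Kˣ) (V : Submodule Fq K)

lemma eval_phiPoly (x : K) :
    (phiPoly G V).eval x = ∏ g : G, ∏ β : V, (x + ((g : Kˣ) : K) + (β : K)) := by
  simp [phiPoly, eval_prod]

lemma natDegree_phiPoly : (phiPoly G V).natDegree = Nat.card G * Nat.card V := by
  have hlin : ∀ (g : G) (β : V),
      X + C ((g : Kˣ) : K) + C (β : K) = X + C (((g : Kˣ) : K) + β) := fun g β => by
    rw [C_add, add_assoc]
  simp_rw [phiPoly, hlin]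
  rw [natDegree_prod_of_monic _ _ fun g _ => monic_prod_of_monic _ _ fun β _ => monic_X_add_C _]
  simp_rw [natDegree_prod_of_monic _ _ fun β _ => monic_X_add_C _, natDegree_X_add_C]
  simp [Nat.card_eq_fintype_card]

lemma eval_phiPoly_add_of_mem (x : K) {v : K} (hv : v ∈ V) :
    (phiPoly G V).eval (x + v) = (phiPoly G V).eval x := by
  simp only [eval_phiPoly]
  refine Finset.prod_congr rfl fun g _ =>
    Fintype.prod_equiv (Equiv.addLeft ⟨v, hv⟩) _ _ fun β => ?_
  simp only [Equiv.coe_addLeft, Submodule.coe_add]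
  ring

lemma eval_phiPoly_mul_of_mem_range (x : K) {g : G}
    (hg : ((g : Kˣ) : K) ∈ Set.range (algebraMap Fq K)) :
    (phiPoly G V).eval (x * ((g : Kˣ) : K)) = (phiPoly G V).eval x := by
  obtain ⟨a, ha⟩ := hg
  set γ : K := ((g : Kˣ) : K)
  have ha0 : a ≠ 0 := by rintro rfl; exact (g : Kˣ).ne_zero (by simp [γ, ← ha])
  have hγ : γ ^ (Nat.card G * Nat.card V) = 1 := by
    rw [pow_mul, ← Units.val_pow_eq_pow_val, ← Subgroup.coe_pow, pow_card_eq_one']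
    simp
  have hrow : ∀ g' : G, ∏ β : V, (x * γ + ((g * g' : G) : Kˣ) + (β : K))
      = γ ^ Nat.card V * ∏ β : V, (x + ((g' : Kˣ) : K) + (β : K)) := fun g' => by
    rw [Nat.card_eq_fintype_card, ← Finset.card_univ, ← Finset.prod_const,
      ← Finset.prod_mul_distrib]
    refine (Fintype.prod_equiv (MulAction.toPerm (Units.mk0 a ha0)) _ _ fun β => ?_).symm
    simp only [MulAction.toPerm_apply, Units.smul_mk0, SetLike.val_smul, Algebra.smul_def, ha,
      Subgroup.coe_mul, Units.val_mul]
    ring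
  rw [eval_phiPoly, eval_phiPoly, ← Fintype.prod_equiv (Equiv.mulLeft g) _ _ fun _ => rfl]
  simp only [Equiv.coe_mulLeft, hrow, Finset.prod_mul_distrib, Finset.prod_const,
    Finset.card_univ, ← Nat.card_eq_fintype_card, ← pow_mul, mul_comm (Nat.card V), hγ, one_mul]

lemma eval_phiPoly_of_mem_cosetClass
    (hG : ∀ g : G, ((g : Kˣ) : K) ∈ Set.range (algebraMap Fq K)) {a x : K}
    (hx : x ∈ cosetClass (V : Set K) G a) : (phiPoly G V).eval x = (phiPoly G V).eval a := by
  obtain ⟨g, hg⟩ := (mem_cosetClass_iff V G a x).1 hx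
  rw [← sub_add_cancel x (a * _), add_comm, eval_phiPoly_add_of_mem G V _ hg,
    eval_phiPoly_mul_of_mem_range G V _ (hG g)]

end PhiPoly

/-- The conclusion of the coset partition lemma; the index `0`, with `α 0 = 0`, stands for the
coset `V` itself. -/
structure IsCosetPartition {Fq K : Type*} [Field Fq] [Field K] [Algebra Fq K]
    (V : Submodule Fq K) (G : Subgroup Kˣ) {ι : Type*} [Zero ι] (α : ι → K) : Prop where
  zero : α 0 = 0
  ne_zero : ∀ (i : ι) (g : G), i ≠ 0 →
    coset (V : Set K) (α i * ((g : Kˣ) : K)) ≠ coset (V : Set K) 0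
  inj : ∀ (i j : ι) (gi gj : G), i ≠ 0 → j ≠ 0 →
    coset (V : Set K) (α i * ((gi : Kˣ) : K)) = coset (V : Set K) (α j * ((gj : Kˣ) : K)) →
      i = j ∧ gi = gj
  cover : (⋃ i, ⋃ g : G, coset (V : Set K) (α i * ((g : Kˣ) : K))) = Set.univ

namespace IsCosetPartition

variable {Fq K : Type*} [Field Fq] [Field K] [Algebra Fq K] {V : Submodule Fq K}
  {G : Subgroup Kˣ} {ι : Type*} [Zero ι] {α : ι → K}

lemma exists_mem_cosetClass (hP : IsCosetPartition V G α) (x : K) :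
    ∃ p, x ∈ cosetClass (V : Set K) G (α p) := by
  have hcover : (⋃ p, cosetClass (V : Set K) G (α p)) = Set.univ := hP.cover
  exact Set.mem_iUnion.1 (hcover ▸ Set.mem_univ x)

lemma apply_notMem (hP : IsCosetPartition V G α) {i : ι} (hi : i ≠ 0) : α i ∉ V := fun h =>
  hP.ne_zero i 1 hi <| (coset_eq_coset_iff V _ _).2 (by simpa using h)

lemma apply_ne_zero (hP : IsCosetPartition V G α) {i : ι} (hi : i ≠ 0) : α i ≠ 0 :=
  fun h => hP.apply_notMem hi (h ▸ zero_mem V)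

lemma eq_of_mem_cosetClass (hP : IsCosetPartition V G α) {x : K} {p p' : ι}
    (hp : x ∈ cosetClass (V : Set K) G (α p)) (hp' : x ∈ cosetClass (V : Set K) G (α p')) :
    p = p' := by
  have key : ∀ {i j : ι} {gi gj : G}, j ≠ 0 → x - α i * ((gi : Kˣ) : K) ∈ V →
      x - α j * ((gj : Kˣ) : K) ∈ V →
      coset (V : Set K) (α j * ((gj : Kˣ) : K)) = coset (V : Set K) (α i * ((gi : Kˣ) : K)) :=
    fun _ hi hj => (coset_eq_coset_iff V _ _).2 (by simpa using sub_mem hi hj)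
  obtain ⟨g, hg⟩ := (mem_cosetClass_iff V G _ x).1 hp
  obtain ⟨g', hg'⟩ := (mem_cosetClass_iff V G _ x).1 hp'
  by_cases h0 : p = 0
  · by_contra hne
    refine hP.ne_zero p' g' (h0 ▸ Ne.symm hne) ?_
    simpa [h0, hP.zero] using key (Ne.symm (h0 ▸ hne)) hg hg'
  by_cases h0' : p' = 0
  · refine absurd ?_ (hP.ne_zero p g h0)
    simpa [h0', hP.zero] using key h0 hg' hg
  exact (hP.inj p p' g g' h0 h0' (key h0' hg hg').symm).1

lemma ncard_cosetClass (hP : IsCosetPartition V G α) {p : ι} (hp : p ≠ 0) :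
    (cosetClass (V : Set K) G (α p)).ncard = Nat.card G * Nat.card V := by
  have hrange : cosetClass (V : Set K) G (α p)
      = Set.range fun gv : G × V => α p * ((gv.1 : Kˣ) : K) + gv.2 := by
    ext x
    rw [mem_cosetClass_iff]
    exact ⟨fun ⟨g, hg⟩ => ⟨(g, ⟨_, hg⟩), by simp⟩,
      fun ⟨gv, hgv⟩ => ⟨gv.1, by simp [← hgv]⟩⟩
  rw [hrange, Set.ncard_range_of_injective, Nat.card_prod]
  rintro ⟨g, v⟩ ⟨g', v'⟩ h
  have hco : coset (V : Set K) (α p * ((g : Kˣ) : K)) =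
      coset (V : Set K) (α p * ((g' : Kˣ) : K)) :=
    (coset_eq_coset_iff V _ _).2 (by
      rw [show α p * ((g : Kˣ) : K) - α p * ((g' : Kˣ) : K) = v' - v by linear_combination h]
      exact sub_mem v'.2 v.2)
  obtain rfl := (hP.inj p p g g' hp hp hco).2
  simpa using h

variable [Fintype K]

lemma eval_phiPoly_injective (hP : IsCosetPartition V G α)
    (hG : ∀ g : G, ((g : Kˣ) : K) ∈ Set.range (algebraMap Fq K)) :
    Function.Injective fun p => (phiPoly G V).eval (α p) := by
  have hdeg : 0 < (phiPoly G V).natDegree := by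
    rw [natDegree_phiPoly]
    exact Nat.mul_pos Nat.card_pos Nat.card_pos
  have key : ∀ {p p' : ι}, p' ≠ 0 → (phiPoly G V).eval (α p) = (phiPoly G V).eval (α p') →
      p = p' := fun {p p'} hp' h => by
    refine hP.eq_of_mem_cosetClass (self_mem_cosetClass V G (α p)) ?_
    refine Polynomial.mem_of_eval_eq_of_ncard_eq_natDegree hdeg ?_
      (fun y hy => eval_phiPoly_of_mem_cosetClass G V hG hy) h
    rw [hP.ncard_cosetClass hp', natDegree_phiPoly]
  intro p p' h
  by_cases hp' : p' = 0
  · by_cases hp : p = 0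
    · rw [hp, hp']
    · exact (key hp h.symm).symm
  · exact key hp' h

lemma mem_cosetClass_of_eval_eq (hP : IsCosetPartition V G α)
    (hG : ∀ g : G, ((g : Kˣ) : K) ∈ Set.range (algebraMap Fq K)) {y : K} {p : ι}
    (h : (phiPoly G V).eval y = (phiPoly G V).eval (α p)) :
    y ∈ cosetClass (V : Set K) G (α p) := by
  obtain ⟨p', hp'⟩ := hP.exists_mem_cosetClass y
  obtain rfl : p' = p :=
    hP.eval_phiPoly_injective hG ((eval_phiPoly_of_mem_cosetClass G V hG hp').symm.trans h)
  exact hp'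

lemma mem_of_eval_phiPoly_eq (hP : IsCosetPartition V G α)
    (hG : ∀ g : G, ((g : Kˣ) : K) ∈ Set.range (algebraMap Fq K)) {y : K}
    (h : (phiPoly G V).eval y = (phiPoly G V).eval 0) : y ∈ V := by
  rw [← hP.zero] at h
  simpa [hP.zero, mem_cosetClass_zero_iff] using hP.mem_cosetClass_of_eval_eq hG h

lemma comp_sub_comp_ne_zero (hP : IsCosetPartition V G α)
    (hG : ∀ g : G, ((g : Kˣ) : K) ∈ Set.range (algebraMap Fq K)) {i j : ι} (hi : i ≠ 0)
    {c : K} (hc : c ≠ 1 ∨ i ≠ j) :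
    (phiPoly G V).comp (X + C (α i)) - (phiPoly G V).comp (C c * X + C (α j)) ≠ 0 := by
  intro h
  have H : ∀ x, (phiPoly G V).eval (x + α i) = (phiPoly G V).eval (c * x + α j) := fun x => by
    simpa [sub_eq_zero, eval_comp] using congrArg (eval x) h
  obtain rfl : i = j := hP.eval_phiPoly_injective hG (by simpa using H 0)
  refine hP.apply_notMem hi (mem_of_forall_homothety_mem V (hc.resolve_right (by simp))
    fun v hv => hP.mem_of_eval_phiPoly_eq hG ?_)
  rw [← H, sub_add_cancel, ← zero_add v, eval_phiPoly_add_of_mem G V 0 hv]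

lemma eval_phiPoly_pow_add_ne (hP : IsCosetPartition V G α)
    (hG : ∀ g : G, ((g : Kˣ) : K) ∈ Set.range (algebraMap Fq K)) {θ : Kˣ}
    (hθ : ∀ x : Kˣ, x ∈ Subgroup.zpowers θ) {N : ℕ} (hN : orderOf θ = N) {i j : ι}
    (hi : i ≠ 0) (hj : j ≠ 0) (hij : i ≠ j) :
    (fun k : Fin N => (phiPoly G V).eval ((θ : K) ^ (k : ℕ) + α i)) ≠
      (fun k : Fin N => (phiPoly G V).eval ((θ : K) ^ (k : ℕ) + α j)) := by
  intro h
  obtain ⟨k, hk, hθk⟩ := exists_val_pow_eq_of_ne_zero hθ (neg_ne_zero.2 (hP.apply_ne_zero hi))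
  have hk := congrFun h ⟨k, hN ▸ hk⟩
  simp only [hθk, neg_add_cancel, neg_add_eq_sub] at hk
  have hco : coset (V : Set K) (α j * (((1 : G) : Kˣ) : K)) =
      coset (V : Set K) (α i * (((1 : G) : Kˣ) : K)) :=
    (coset_eq_coset_iff V _ _).2 (by simpa using hP.mem_of_eval_phiPoly_eq hG hk.symm)
  exact hij (hP.inj j i 1 1 hj hi hco).1.symm

lemma range_eval_phiPoly_pow_add (hP : IsCosetPartition V G α)
    (hG : ∀ g : G, ((g : Kˣ) : K) ∈ Set.range (algebraMap Fq K)) (hG1 : 1 < Nat.card G)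
    {θ : Kˣ} (hθ : ∀ x : Kˣ, x ∈ Subgroup.zpowers θ) {N : ℕ} (hN : orderOf θ = N) {i₀ : ι}
    (hi₀ : i₀ ≠ 0) :
    Set.range (fun p : {i : ι // i ≠ 0} × Fin N =>
        (phiPoly G V).eval ((θ : K) ^ (p.2 : ℕ) + α p.1)) =
      Set.range fun p => (phiPoly G V).eval (α p) := by
  refine subset_antisymm ?_ ?_
  · rintro _ ⟨⟨⟨i, -⟩, k⟩, rfl⟩
    obtain ⟨p, hp⟩ := hP.exists_mem_cosetClass ((θ : K) ^ (k : ℕ) + α i)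
    exact ⟨p, (eval_phiPoly_of_mem_cosetClass G V hG hp).symm⟩
  rintro _ ⟨p, rfl⟩
  by_cases hp : p = 0
  · obtain ⟨k, hk, hθk⟩ :=
      exists_val_pow_eq_of_ne_zero hθ (neg_ne_zero.2 (hP.apply_ne_zero hi₀))
    exact ⟨(⟨i₀, hi₀⟩, ⟨k, hN ▸ hk⟩), by simp [hθk, hp, hP.zero]⟩
  · have := Finite.one_lt_card_iff_nontrivial.1 hG1
    obtain ⟨g, hg⟩ := exists_ne (1 : G)
    have hx : α p * ((g : Kˣ) : K) - α p ≠ 0 := by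
      rw [sub_ne_zero, Ne, mul_eq_left₀ (hP.apply_ne_zero hp)]
      exact fun h => hg (Subtype.ext (Units.ext h))
    obtain ⟨k, hk, hθk⟩ := exists_val_pow_eq_of_ne_zero hθ hx
    refine ⟨(⟨p, hp⟩, ⟨k, hN ▸ hk⟩), ?_⟩
    simp only [hθk, sub_add_cancel, eval_phiPoly_mul_of_mem_range G V _ (hG g)]

lemma ncard_range_eval_phiPoly_pow_add [Finite ι] (hP : IsCosetPartition V G α)
    (hG : ∀ g : G, ((g : Kˣ) : K) ∈ Set.range (algebraMap Fq K)) (hG1 : 1 < Nat.card G)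
    {θ : Kˣ} (hθ : ∀ x : Kˣ, x ∈ Subgroup.zpowers θ) {N : ℕ} (hN : orderOf θ = N) {i₀ : ι}
    (hi₀ : i₀ ≠ 0) :
    (Set.range fun p : {i : ι // i ≠ 0} × Fin N =>
      (phiPoly G V).eval ((θ : K) ^ (p.2 : ℕ) + α p.1)).ncard = Nat.card ι := by
  rw [hP.range_eval_phiPoly_pow_add hG hG1 hθ hN hi₀,
    Set.ncard_range_of_injective (hP.eval_phiPoly_injective hG)]

lemma card_filter_eval_phiPoly_pow_add_eq_le (hP : IsCosetPartition V G α)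
    (hG : ∀ g : G, ((g : Kˣ) : K) ∈ Set.range (algebraMap Fq K)) {x : K} {N : ℕ}
    (hN : orderOf x = N) {i j : ι} (hi : i ≠ 0) {τ : ℕ} (hτ : τ < N) (hij : i ≠ j ∨ 1 ≤ τ) :
    ((Finset.range N).filter fun k =>
      (phiPoly G V).eval (x ^ k + α i) = (phiPoly G V).eval (x ^ ((k + τ) % N) + α j)).card
        ≤ Nat.card G * Nat.card V := by
  have hc : x ^ τ ≠ 1 ∨ i ≠ j :=
    hij.symm.imp_left fun hτ1 => pow_ne_one_of_lt_orderOf (by omega) (hN ▸ hτ)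
  calc _ ≤ ((phiPoly G V).comp (X + C (α i)) -
          (phiPoly G V).comp (C (x ^ τ) * X + C (α j))).natDegree := by
        refine Polynomial.card_le_natDegree_of_injOn (hP.comp_sub_comp_ne_zero hG hi hc)
          (e := (x ^ ·)) (fun k hk l hl hkl => ?_) fun k hk => ?_
        · simp only [Finset.coe_filter, Finset.mem_range, Set.mem_ofPred_eq] at hk hl
          exact pow_injOn_Iio_orderOf (hN ▸ hk.1 : k < orderOf x) (hN ▸ hl.1 : l < orderOf x)
            hkl
        · rw [Finset.mem_filter] at hk
          simp [eval_comp, hk.2, ← hN, pow_mod_orderOf, pow_add, mul_comm]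
    _ ≤ (phiPoly G V).natDegree := Polynomial.natDegree_comp_sub_comp_le _ _ _ _
    _ = Nat.card G * Nat.card V := natDegree_phiPoly G V

end IsCosetPartition

theorem stmt7_general (q r m t : ℕ) (ht : t ≤ m - 1)
    (hr : r ∣ q - 1)
    (Fq K : Type*) [Field Fq] [Fintype Fq] [Field K] [Fintype K] [Algebra Fq K]
    (hcq : Fintype.card Fq = q) (hcK : Fintype.card K = q ^ m)
    (V : Submodule Fq K) (hV : Module.finrank Fq V = t)
    (G : Subgroup Kˣ) (hG : Nat.card G = r)
    (hGsub : ∀ g : G, ∃ a : Fq, algebraMap Fq K a = ((g : Kˣ) : K))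
    (hr2 : 2 ≤ r)
    (θ : Kˣ) (hθ : ∀ x : Kˣ, x ∈ Subgroup.zpowers θ)
    (α : Fin ((q ^ (m - t) - 1) / r + 1) → K) (hα0 : α 0 = 0)
    (hne : ∀ (i : Fin ((q ^ (m - t) - 1) / r + 1)) (g : G), i ≠ 0 →
      coset (V : Set K) (α i * ((g : Kˣ) : K)) ≠ coset (V : Set K) 0)
    (hinj : ∀ (i j : Fin ((q ^ (m - t) - 1) / r + 1)) (gi gj : G), i ≠ 0 → j ≠ 0 →
      coset (V : Set K) (α i * ((gi : Kˣ) : K)) = coset (V : Set K) (α j * ((gj : Kˣ) : K)) →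
      i = j ∧ gi = gj)
    (hcover : (⋃ i, ⋃ g : G, coset (V : Set K) (α i * ((g : Kˣ) : K))) = Set.univ) :
    (∀ i j : Fin ((q ^ (m - t) - 1) / r + 1), i ≠ 0 → j ≠ 0 → i ≠ j →
      (fun k : Fin (q ^ m - 1) => (phiPoly G V).eval (((θ : Kˣ) : K) ^ (k : ℕ) + α i)) ≠
      (fun k : Fin (q ^ m - 1) => (phiPoly G V).eval (((θ : Kˣ) : K) ^ (k : ℕ) + α j))) ∧
    (Set.range (fun p : {i : Fin ((q ^ (m - t) - 1) / r + 1) // i ≠ 0} × Fin (q ^ m - 1) =>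
      (phiPoly G V).eval (((θ : Kˣ) : K) ^ ((p.2 : ℕ)) + α p.1.1))).ncard
        = (q ^ (m - t) - 1) / r + 1 ∧
    (∀ i j : Fin ((q ^ (m - t) - 1) / r + 1), i ≠ 0 → j ≠ 0 →
      ∀ τ : ℕ, τ < q ^ m - 1 → (i ≠ j ∨ 1 ≤ τ) →
      ((Finset.range (q ^ m - 1)).filter (fun k =>
        (phiPoly G V).eval (((θ : Kˣ) : K) ^ k + α i) =
        (phiPoly G V).eval (((θ : Kˣ) : K) ^ ((k + τ) % (q ^ m - 1)) + α j))).card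
          ≤ r * q ^ t) := by
  have hP : IsCosetPartition V G α := ⟨hα0, hne, hinj, hcover⟩
  have hq : 2 ≤ q := hcq ▸ Fintype.one_lt_card
  have hm : m ≠ 0 := by
    rintro rfl
    simpa [hcK] using Fintype.one_lt_card (α := K)
  have hN : orderOf θ = q ^ m - 1 := by
    rw [orderOf_eq_card_of_forall_mem_zpowers hθ, Nat.card_units, Nat.card_eq_fintype_card, hcK]
  have hd : Nat.card G * Nat.card V = r * q ^ t := by
    rw [hG, Module.natCard_eq_pow_finrank (K := Fq), hV, Nat.card_eq_fintype_card, hcq]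
  -- `r ≤ q - 1 ≤ q ^ (m - t) - 1`, so there is an index besides `0`
  have hL : 1 ≤ (q ^ (m - t) - 1) / r := by
    have := Nat.le_of_dvd (by omega) hr
    have := Nat.le_self_pow (show m - t ≠ 0 by omega) q
    exact (Nat.one_le_div_iff (by omega)).2 (by omega)
  have h1 : (⟨1, by omega⟩ : Fin ((q ^ (m - t) - 1) / r + 1)) ≠ 0 := by simp [Fin.ext_iff]
  refine ⟨fun i j hi hj hij => hP.eval_phiPoly_pow_add_ne hGsub hθ hN hi hj hij, ?_,
    fun i j hi _ τ hτ hij => hd ▸ hP.card_filter_eval_phiPoly_pow_add_eq_le hGsub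
      (orderOf_units.trans hN) hi hτ hij⟩
  simpa using hP.ncard_range_eval_phiPoly_pow_add hGsub (by omega) hθ hN h1

/-- the construction yields an FHS set of `(q^{m-t}-1)/r` pairwise
distinct sequences of length `q^m - 1` over an alphabet of size `(q^{m-t}-1)/r + 1`,
with maximum Hamming correlation at most `r q^t`. -/
theorem stmt7 (q r m t : ℕ) (hq : IsPrimePow q) (hm : 1 ≤ m) (ht : t ≤ m - 1)
    (hr : r ∣ q - 1)
    (Fq K : Type*) [Field Fq] [Fintype Fq] [Field K] [Fintype K] [Algebra Fq K]
    (hcq : Fintype.card Fq = q) (hcK : Fintype.card K = q ^ m)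
    (V : Submodule Fq K) (hV : Module.finrank Fq V = t)
    (G : Subgroup Kˣ) (hG : Nat.card G = r)
    (hGsub : ∀ g : G, ∃ a : Fq, algebraMap Fq K a = ((g : Kˣ) : K))
    (hr2 : 2 ≤ r)
    (θ : Kˣ) (hθ : ∀ x : Kˣ, x ∈ Subgroup.zpowers θ)
    (α : Fin ((q ^ (m - t) - 1) / r + 1) → K) (hα0 : α 0 = 0)
    (hne : ∀ (i : Fin ((q ^ (m - t) - 1) / r + 1)) (g : G), i ≠ 0 →
      coset (V : Set K) (α i * ((g : Kˣ) : K)) ≠ coset (V : Set K) 0)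
    (hinj : ∀ (i j : Fin ((q ^ (m - t) - 1) / r + 1)) (gi gj : G), i ≠ 0 → j ≠ 0 →
      coset (V : Set K) (α i * ((gi : Kˣ) : K)) = coset (V : Set K) (α j * ((gj : Kˣ) : K)) →
      i = j ∧ gi = gj)
    (hcover : (⋃ i, ⋃ g : G, coset (V : Set K) (α i * ((g : Kˣ) : K))) = Set.univ) :
    (∀ i j : Fin ((q ^ (m - t) - 1) / r + 1), i ≠ 0 → j ≠ 0 → i ≠ j →
      (fun k : Fin (q ^ m - 1) => (phiPoly G V).eval (((θ : Kˣ) : K) ^ (k : ℕ) + α i)) ≠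
      (fun k : Fin (q ^ m - 1) => (phiPoly G V).eval (((θ : Kˣ) : K) ^ (k : ℕ) + α j))) ∧
    (Set.range (fun p : {i : Fin ((q ^ (m - t) - 1) / r + 1) // i ≠ 0} × Fin (q ^ m - 1) =>
      (phiPoly G V).eval (((θ : Kˣ) : K) ^ ((p.2 : ℕ)) + α p.1.1))).ncard
        = (q ^ (m - t) - 1) / r + 1 ∧
    (∀ i j : Fin ((q ^ (m - t) - 1) / r + 1), i ≠ 0 → j ≠ 0 →
      ∀ τ : ℕ, τ < q ^ m - 1 → (i ≠ j ∨ 1 ≤ τ) →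
      ((Finset.range (q ^ m - 1)).filter (fun k =>
        (phiPoly G V).eval (((θ : Kˣ) : K) ^ k + α i) =
        (phiPoly G V).eval (((θ : Kˣ) : K) ^ ((k + τ) % (q ^ m - 1)) + α j))).card
          ≤ r * q ^ t) :=
  stmt7_general q r m t ht hr Fq K hcq hcK V hV G hG hGsub hr2 θ hθ α hα0 hne hinj hcover
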